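/- For every natural number k and all words A, B ∈ W_ω, if A ∼ B (that is, A ≾ B and B ≾ A) then Ak ∼ Bk, where Ak denotes the word A with the symbol k appended at the end. Consequently, for each k the operation a_k : A ↦ Ak is well defined on the quotient W_ω/∼. -/

import Mathlib

open scoped Classical

/-- Words: finite strings over the alphabet of natural numbers. -/
abbrev Word := List ℕ

/-- Lexicographic "not greater" comparison of finite sequences of words,
where entries are compared with the preorder `r`. -/
def LexLe (r : Word → Word → Prop) (xs ys : List Word) : Prop :=
  (xs.length ≤ ys.length ∧ ∀ i < xs.length,
      r (xs.getD i []) (ys.getD i []) ∧ r (ys.getD i []) (xs.getD i []))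
  ∨ ∃ s, s < xs.length ∧ s < ys.length ∧
      (∀ i < s, r (xs.getD i []) (ys.getD i []) ∧ r (ys.getD i []) (xs.getD i [])) ∧
      r (xs.getD s []) (ys.getD s []) ∧ ¬ r (ys.getD s []) (xs.getD s [])

/-- `M` is a lexicographically maximal subsequence of `xs` (w.r.t. entry preorder `r`). -/
def IsLexMax (r : Word → Word → Prop) (xs M : List Word) : Prop :=
  M.Sublist xs ∧ ∀ N : List Word, N.Sublist xs → LexLe r N M

/-- Fuelled version of the recursively defined preorder `≾` on words:
`Λ ≾ Λ`; and if `n` is the minimal symbol of `A ++ B`, split `A` and `B` into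
blocks at `n` and compare the lexicographically maximal subsequences of blocks. -/
def leAux : ℕ → Word → Word → Prop
  | 0, A, B => A = [] ∧ B = []
  | (fuel+1), A, B =>
      (A = [] ∧ B = []) ∨
      (∀ m, (A ++ B).min? = some m →
        ∀ MA MB : List Word, IsLexMax (leAux fuel) (A.splitOn m) MA →
          IsLexMax (leAux fuel) (B.splitOn m) MB →
          LexLe (leAux fuel) MA MB)

/-- The preorder `≾` on words (the fuel `|A|+|B|+1` suffices for the recursion). -/
def Wle (A B : Word) : Prop := leAux (A.length + B.length + 1) A B

/-- The equivalence `∼`: `A ≾ B` and `B ≾ A`. -/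
def Wequiv (A B : Word) : Prop := Wle A B ∧ Wle B A

/-- The strict relation `≺`: `A ≾ B` and not `B ≾ A`. -/
def Wlt (A B : Word) : Prop := Wle A B ∧ ¬ Wle B A

/-- Fuelled version of the normal form predicate `NF`. -/
def NFAux : ℕ → Word → Prop
  | 0, A => A = []
  | (fuel+1), A => A = [] ∨ ∀ m, A.min? = some m →
      (A.splitOn m).Chain' (fun x y => Wle y x) ∧ ∀ b ∈ A.splitOn m, NFAux fuel b

/-- `A` is in normal form. -/
def InNF (A : Word) : Prop := NFAux A.length A

/-- `◇ₖ A`: the normal form of the word `A` with symbol `k` appended. -/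
noncomputable def diamond (k : ℕ) (A : Word) : Word :=
  if h : ∃ B, InNF B ∧ Wequiv B (A ++ [k]) then h.choose else []

/-- Fuelled version of the ordinal value functions `o_n` on normal-form words in `S_n`. -/
noncomputable def oAux : ℕ → ℕ → Word → Ordinal
  | 0, _, _ => 0
  | (fuel+1), n, A =>
      if A.all (· = n) then (A.length : Ordinal)
      else ((A.splitOn n).map (fun b => Ordinal.omega0 ^ oAux fuel (n+1) b)).foldr (· + ·) 0

/-- The ordinal value function `o_n : NF ∩ S_n → Ordinals`. -/
noncomputable def oW (n : ℕ) (A : Word) : Ordinal :=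
  oAux (A.foldr max 0 + A.length + 1) n A

/-- The towers of `ω`-exponentiations: `ω_0 = 1`, `ω_{n+1} = ω ^ ω_n`. -/
noncomputable def omegaTower : ℕ → Ordinal
  | 0 => 1
  | (n+1) => Ordinal.omega0 ^ omegaTower n

/-- `ε₀`, the supremum of the `ω`-towers. -/
noncomputable def eps0 : Ordinal := ⨆ n : ℕ, omegaTower n

/-- The function `ψ` on ordinals: `ψ 0 = ω`, and for `α > 0` with Cantor normal form
`ω^{α_1}+⋯+ω^{α_n}` (non-increasing exponents), `ψ α = ω^{α_1}+⋯+ω^{α_{n-1}}+ω^{α_n+1}`. -/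
noncomputable def psi (α : Ordinal) : Ordinal :=
  match (Ordinal.CNF Ordinal.omega0 α).getLast? with
  | none => Ordinal.omega0
  | some p =>
      ((Ordinal.CNF Ordinal.omega0 α).dropLast).foldr
        (fun q r => Ordinal.omega0 ^ q.1 * q.2 + r) 0
      + (Ordinal.omega0 ^ p.1 * (p.2 - 1) + Ordinal.omega0 ^ (p.1 + 1))

/-- The standard fundamental sequences `α[n]` for limit ordinals below `ε₀`
(junk values elsewhere). -/
noncomputable def fundSeq (α : Ordinal) (n : ℕ) : Ordinal :=
  match (Ordinal.CNF Ordinal.omega0 α).getLast? with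
  | none => 0
  | some p =>
    let pre := ((Ordinal.CNF Ordinal.omega0 α).dropLast).foldr
        (fun q r => Ordinal.omega0 ^ q.1 * q.2 + r) 0
      + Ordinal.omega0 ^ p.1 * (p.2 - 1)
    if p.1 = 0 then 0
    else if h : ∃ e', p.1 = e' + 1 then
      pre + Ordinal.omega0 ^ h.choose * ((n : Ordinal) + 1)
    else if hlt : p.1 < α then pre + Ordinal.omega0 ^ (fundSeq p.1 n) else 0
termination_by α
decreasing_by exact hlt

/-- The relation `R`: `α R β` iff `β = α + 1`, or `β` is a limit and `α = β[n]` for some `n`. -/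
def Rrel (α β : Ordinal) : Prop :=
  β = α + 1 ∨ (Order.IsSuccLimit β ∧ ∃ n : ℕ, α = fundSeq β n)

/-!
A word `A` all of whose letters are at least `n` has an ordinal value at level `n`: split at
its least letter `m` into blocks `b₁ m b₂ ⋯ m bₖ`, it is `ω ^ v(b₁) + ⋯ + ω ^ v(bₖ)` (blocks
valued at level `m + 1`), topped by `m - n` exponentiations `ω ^ ·`. Since `ω ^ a + ω ^ b = ω ^ b`
for `a < b`, this sum equals the sum over the lexicographically maximal subsequence of blocks,
which is a Cantor normal form, and Cantor normal forms compare lexicographically. By induction,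
`A ≾ B` iff `v(A) ≤ v(B)` at level `0`.

At level `n`, appending the letter `n` adds an empty block, and appending a larger letter changes
only the last block `b`, replacing the last term `ω ^ e`, `e = v(b)`, by a larger power of `ω`
that absorbs it. As `e` is
determined by the value, `v(A k)` is by induction a function of `v(A)`, so `A ∼ B` forces
`A k ∼ B k`.
-/

open Ordinal

namespace List

variable {α : Type*} [LinearOrder α] {a b : α} {l m : List α}

theorem cons_le_cons_iff' : a :: l ≤ b :: m ↔ a < b ∨ a = b ∧ l ≤ m := by
  rw [← not_lt, List.cons_lt_cons_iff, ← not_lt]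
  rcases lt_trichotomy a b with h | rfl | h
  · simp [h, h.ne', not_lt_of_gt h]
  · simp
  · simp [h, h.ne', not_lt_of_gt h]

theorem nil_le' (l : List α) : [] ≤ l :=
  not_lt.1 (List.not_lt_nil l)

theorem not_cons_le_nil : ¬ a :: l ≤ [] :=
  not_le.2 (List.nil_lt_cons a l)

end List

namespace Ordinal

noncomputable def opowSum (u : List Ordinal) : Ordinal := (u.map (ω ^ ·)).sum

@[simp] theorem opowSum_nil : opowSum [] = 0 := rfl

@[simp] theorem opowSum_cons (a : Ordinal) (u : List Ordinal) :
    opowSum (a :: u) = ω ^ a + opowSum u := rfl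

@[simp] theorem opowSum_append (u w : List Ordinal) :
    opowSum (u ++ w) = opowSum u + opowSum w := by
  simp [opowSum]

theorem opow_le_opowSum {a : Ordinal} {u : List Ordinal} (ha : a ∈ u) : ω ^ a ≤ opowSum u := by
  obtain ⟨s, t, rfl⟩ := List.append_of_mem ha
  simp only [opowSum_append, opowSum_cons, ← add_assoc]
  exact le_add_right (le_add_left le_rfl)

theorem length_le_opowSum (u : List Ordinal) : (u.length : Ordinal) ≤ opowSum u := by
  induction u with
  | nil => simp
  | cons a u ih =>
    rw [List.length_cons, Nat.cast_succ, ← Nat.cast_one, ← Nat.cast_add, add_comm, Nat.cast_add,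
      Nat.cast_one, opowSum_cons]
    exact add_le_add (Order.one_le_iff_pos.2 (opow_pos a omega0_pos)) ih

theorem opowSum_pos {u : List Ordinal} (hu : u ≠ []) : 0 < opowSum u :=
  lt_of_lt_of_le (by exact_mod_cast List.length_pos_of_ne_nil hu) (length_le_opowSum u)

theorem opow_add_opowSum {a : Ordinal} {u : List Ordinal} (h : ∃ b ∈ u, a < b) :
    ω ^ a + opowSum u = opowSum u := by
  obtain ⟨b, hb, hab⟩ := h
  exact add_of_omega0_opow_le ((opow_lt_opow_iff_right one_lt_omega0).2 hab) (opow_le_opowSum hb)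

theorem opowSum_lt_opow_succ {a : Ordinal} {u : List Ordinal} (h : ∀ c ∈ u, c ≤ a) :
    opowSum u < ω ^ Order.succ a := by
  induction u with
  | nil => exact opow_pos _ omega0_pos
  | cons c u ih =>
    rw [List.forall_mem_cons] at h
    exact isPrincipal_add_omega0_opow _
      ((opow_lt_opow_iff_right one_lt_omega0).2 (Order.lt_succ_of_le h.1)) (ih h.2)

theorem strictMonoOn_opowSum : StrictMonoOn opowSum {u : List Ordinal | u.Pairwise (· ≥ ·)} := by
  intro u hu w hw huw
  induction huw with
  | nil => exact lt_of_lt_of_le (opow_pos _ omega0_pos) le_self_add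
  | @rel a u b w hab =>
    calc opowSum (a :: u) < ω ^ Order.succ a :=
          opowSum_lt_opow_succ (List.forall_mem_cons.2 ⟨le_rfl, (List.pairwise_cons.1 hu).1⟩)
      _ ≤ ω ^ b := opow_le_opow_right omega0_pos (Order.succ_le_of_lt hab)
      _ ≤ opowSum (b :: w) := le_self_add
  | cons _ ih =>
    exact (add_lt_add_iff_left _).2 (ih (List.pairwise_cons.1 hu).2 (List.pairwise_cons.1 hw).2)

theorem add_opow_mod_opow_ne_zero (β : Ordinal) {e e' : Ordinal} (he : e < e') :
    (β + ω ^ e) % ω ^ e' ≠ 0 := by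
  have hne : ω ^ e' ≠ 0 := opow_ne_zero _ omega0_ne_zero
  rw [← div_add_mod β (ω ^ e'), add_assoc, mul_add_mod_self, mod_eq_of_lt
    (isPrincipal_add_omega0_opow _ (mod_lt _ hne) ((opow_lt_opow_iff_right one_lt_omega0).2 he))]
  exact (lt_of_lt_of_le (opow_pos e omega0_pos) le_add_self).ne'

theorem add_opow_mod_opow (β e : Ordinal) : (β + ω ^ e) % ω ^ e = 0 := by
  have hne : ω ^ e ≠ 0 := opow_ne_zero _ omega0_ne_zero
  rw [← div_add_mod β (ω ^ e), add_assoc, add_omega0_opow (mod_lt _ hne), ← mul_add_one,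
    mul_mod]

theorem eq_of_add_opow_eq_add_opow {β β' e e' : Ordinal} (h : β + ω ^ e = β' + ω ^ e') :
    e = e' := by
  rcases lt_trichotomy e e' with he | he | he
  · exact absurd (h ▸ add_opow_mod_opow β' e') (add_opow_mod_opow_ne_zero β he)
  · exact he
  · exact absurd (h ▸ add_opow_mod_opow β e) (add_opow_mod_opow_ne_zero β' he)

/-- The least exponent in the Cantor normal form of `α` (junk value `0` for `α = 0`). -/
noncomputable def lastExp (α : Ordinal) : Ordinal :=
  if h : ∃ e β : Ordinal, β + ω ^ e = α then h.choose else 0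

theorem lastExp_add_opow (β e : Ordinal) : lastExp (β + ω ^ e) = e := by
  have h : ∃ e' β' : Ordinal, β' + ω ^ e' = β + ω ^ e := ⟨e, β, rfl⟩
  rw [lastExp, dif_pos h]
  exact eq_of_add_opow_eq_add_opow h.choose_spec.choose_spec

end Ordinal

namespace List

variable {α β : Type*} [LinearOrder α] (v : β → α)

def suffixMaxima : List β → List β
  | [] => []
  | x :: l => if ∀ y ∈ l, v y ≤ v x then x :: suffixMaxima l else suffixMaxima l

variable {v}

theorem suffixMaxima_sublist (l : List β) : (suffixMaxima v l).Sublist l := by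
  induction l with
  | nil => exact Sublist.slnil
  | cons x l ih =>
    rw [suffixMaxima]
    split_ifs
    · exact ih.cons_cons x
    · exact ih.cons x

theorem pairwise_map_suffixMaxima (l : List β) : ((suffixMaxima v l).map v).Pairwise (· ≥ ·) := by
  induction l with
  | nil => exact Pairwise.nil
  | cons x l ih =>
    rw [suffixMaxima]
    split_ifs with hx
    · refine pairwise_cons.2 ⟨?_, ih⟩
      simp only [mem_map]
      rintro _ ⟨y, hy, rfl⟩
      exact hx y ((suffixMaxima_sublist l).subset hy)
    · exact ih

theorem exists_suffixMaxima_eq_cons {l : List β} (hl : l ≠ []) :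
    ∃ x t, suffixMaxima v l = x :: t ∧ ∀ y ∈ l, v y ≤ v x := by
  induction l with
  | nil => exact absurd rfl hl
  | cons x l ih =>
    rw [suffixMaxima]
    split_ifs with hx
    · exact ⟨x, _, rfl, forall_mem_cons.2 ⟨le_rfl, hx⟩⟩
    · push Not at hx
      obtain ⟨y, hy, hxy⟩ := hx
      obtain ⟨z, t, hz, hmax⟩ := ih (ne_nil_of_mem hy)
      exact ⟨z, t, hz, forall_mem_cons.2 ⟨hxy.le.trans (hmax y hy), hmax⟩⟩

theorem map_le_map_suffixMaxima {N l : List β} (hN : N.Sublist l) :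
    N.map v ≤ (suffixMaxima v l).map v := by
  induction l generalizing N with
  | nil => rw [sublist_nil.1 hN]; exact nil_le' _
  | cons x l ih =>
    rw [suffixMaxima]
    rcases sublist_cons_iff.1 hN with hN | ⟨N, rfl, hN'⟩
    · split_ifs with hx
      · cases N with
        | nil => exact nil_le' _
        | cons y N =>
          rw [map_cons, map_cons, cons_le_cons_iff']
          refine (hx y (hN.subset mem_cons_self)).lt_or_eq.imp_right fun hxy => ⟨hxy, ?_⟩
          exact ih ((sublist_cons_self y N).trans hN)
      · exact ih hN
    · split_ifs with hx
      · rw [map_cons, map_cons, cons_le_cons_iff']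
        exact Or.inr ⟨rfl, ih hN'⟩
      · push Not at hx
        obtain ⟨y, hy, hxy⟩ := hx
        obtain ⟨z, t, hz, hmax⟩ := exists_suffixMaxima_eq_cons (v := v) (ne_nil_of_mem hy)
        rw [hz, map_cons, map_cons, cons_le_cons_iff']
        exact Or.inl (hxy.trans_le (hmax y hy))

theorem opowSum_map_suffixMaxima (v : β → Ordinal) (l : List β) :
    Ordinal.opowSum ((suffixMaxima v l).map v) = Ordinal.opowSum (l.map v) := by
  induction l with
  | nil => rfl
  | cons x l ih =>
    rw [suffixMaxima]
    split_ifs with hx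
    · simp only [map_cons, Ordinal.opowSum_cons, ih]
    · push Not at hx
      obtain ⟨y, hy, hxy⟩ := hx
      rw [ih, map_cons, Ordinal.opowSum_cons,
        Ordinal.opow_add_opowSum ⟨v y, mem_map_of_mem hy, hxy⟩]

theorem length_add_length_le_sum {α : Type*} {x y : List α} {L : List (List α)} (hx : x ∈ L)
    (hy : y ∈ L) (hxy : x ≠ y) : x.length + y.length ≤ (L.map length).sum := by
  rw [← sum_map_erase length hx]
  have hy' : y ∈ L.erase x := (mem_erase_of_ne hxy.symm).2 hy
  exact Nat.add_le_add_left (single_le_sum (fun _ _ => Nat.zero_le _) _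
    (mem_map_of_mem (f := length) (by convert hy'))) _

variable {α : Type*} [BEq α] {a : α}

theorem mem_and_ne_of_mem_splitOn [LawfulBEq α] {l b : List α} (hb : b ∈ l.splitOn a) {x : α}
    (hx : x ∈ b) : x ∈ l ∧ x ≠ a := by
  induction l generalizing b with
  | nil => simp_all
  | cons y l ih =>
    obtain ⟨c, t, hct⟩ := exists_cons_of_ne_nil (splitOn_ne_nil a l)
    rw [splitOn_cons_eq_if_modifyHead] at hb
    split_ifs at hb with hy
    · rcases mem_cons.1 hb with rfl | hb
      · simp at hx
      · exact (ih hb hx).imp_left (mem_cons_of_mem y)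
    · rw [hct, modifyHead_cons, mem_cons] at hb
      rcases hb with rfl | hb
      · rcases mem_cons.1 hx with rfl | hx
        · exact ⟨mem_cons_self, fun h => by simp [h] at hy⟩
        · exact (ih (hct ▸ mem_cons_self) hx).imp_left (mem_cons_of_mem y)
      · exact (ih (hct ▸ mem_cons_of_mem c hb) hx).imp_left (mem_cons_of_mem y)

theorem sum_map_length_splitOn_add_length (a : α) (l : List α) :
    ((l.splitOn a).map length).sum + (l.splitOn a).length = l.length + 1 := by
  induction l with
  | nil => simp
  | cons y l ih =>
    obtain ⟨c, t, hct⟩ := exists_cons_of_ne_nil (splitOn_ne_nil a l)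
    rw [hct] at ih
    rw [splitOn_cons_eq_if_modifyHead, hct]
    split_ifs <;>
      simp only [modifyHead_cons, map_cons, sum_cons, length_cons, length_nil] at ih ⊢ <;> omega

theorem two_le_length_splitOn [LawfulBEq α] {l : List α} (h : a ∈ l) :
    2 ≤ (l.splitOn a).length := by
  by_contra! hlt
  obtain ⟨b, hb⟩ : ∃ b, l.splitOn a = [b] := by
    rcases hS : l.splitOn a with _ | ⟨b, _ | ⟨c, t⟩⟩
    · exact absurd hS (splitOn_ne_nil a l)
    · exact ⟨b, rfl⟩
    · simp [hS] at hlt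
  have hl : l = b := by rw [← intercalate_splitOn (xs := l) a, hb, intercalate_singleton]
  exact (mem_and_ne_of_mem_splitOn (hb ▸ mem_singleton_self b) (hl ▸ h)).2 rfl

theorem length_lt_of_mem_splitOn [LawfulBEq α] {l b : List α} (h : a ∈ l)
    (hb : b ∈ l.splitOn a) : b.length < l.length := by
  have := single_le_sum (fun _ _ => Nat.zero_le _) _ (mem_map_of_mem (f := length) hb)
  have := sum_map_length_splitOn_add_length a l
  have := two_le_length_splitOn h
  omega

theorem splitOn_append_singleton_self [LawfulBEq α] (l : List α) :
    (l ++ [a]).splitOn a = l.splitOn a ++ [[]] :=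
  splitOn_append_cons_self l []

theorem exists_splitOn_append_singleton [LawfulBEq α] {c : α} (hc : c ≠ a) (l : List α) :
    ∃ L b, l.splitOn a = L ++ [b] ∧ (l ++ [c]).splitOn a = L ++ [b ++ [c]] := by
  induction l with
  | nil => exact ⟨[], [], rfl, splitOn_eq_singleton (by simpa using hc.symm)⟩
  | cons y l ih =>
    obtain ⟨L, b, h₁, h₂⟩ := ih
    rw [cons_append, splitOn_cons_eq_if_modifyHead, splitOn_cons_eq_if_modifyHead, h₁, h₂]
    split_ifs
    · exact ⟨[] :: L, b, rfl, rfl⟩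
    · cases L with
      | nil => exact ⟨[], y :: b, rfl, rfl⟩
      | cons d L => exact ⟨(y :: d) :: L, b, rfl, rfl⟩

end List

section LexMax

variable {r : Word → Word → Prop}

theorem lexLe_nil_left (ys : List Word) : LexLe r [] ys :=
  Or.inl ⟨Nat.zero_le _, fun i hi => absurd hi (Nat.not_lt_zero i)⟩

theorem not_lexLe_cons_nil (x : Word) (xs : List Word) : ¬ LexLe r (x :: xs) [] := by
  rintro (⟨hlen, -⟩ | ⟨s, -, hs, -⟩) <;> simp at *

theorem lexLe_cons_cons {x y : Word} {xs ys : List Word} :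
    LexLe r (x :: xs) (y :: ys) ↔ (r x y ∧ ¬ r y x) ∨ (r x y ∧ r y x ∧ LexLe r xs ys) := by
  constructor
  · rintro (⟨hlen, hall⟩ | ⟨s, hs₁, hs₂, hpre, hxy, hyx⟩)
    · have h0 := hall 0 (by simp)
      refine Or.inr ⟨h0.1, h0.2, Or.inl ⟨by simpa using hlen, fun i hi => ?_⟩⟩
      simpa using hall (i + 1) (by simpa using hi)
    · cases s with
      | zero => exact Or.inl ⟨hxy, hyx⟩
      | succ s =>
        have h0 := hpre 0 (Nat.succ_pos _)
        refine Or.inr ⟨h0.1, h0.2, Or.inr ⟨s, by simpa using hs₁, by simpa using hs₂,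
          fun i hi => ?_, by simpa using hxy, by simpa using hyx⟩⟩
        simpa using hpre (i + 1) (by omega)
  · rintro (⟨hxy, hyx⟩ | ⟨hxy, hyx, ⟨hlen, hall⟩ | ⟨s, hs₁, hs₂, hpre, h₁, h₂⟩⟩)
    · exact Or.inr ⟨0, by simp, by simp, fun i hi => absurd hi (Nat.not_lt_zero i), hxy, hyx⟩
    · refine Or.inl ⟨by simpa using hlen, fun i hi => ?_⟩
      cases i with
      | zero => exact ⟨hxy, hyx⟩
      | succ i => simpa using hall i (by simpa using hi)
    · refine Or.inr ⟨s + 1, by simpa using hs₁, by simpa using hs₂, fun i hi => ?_, h₁, h₂⟩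
      cases i with
      | zero => exact ⟨hxy, hyx⟩
      | succ i => simpa using hpre i (by omega)

variable {α : Type*} [LinearOrder α] {v : Word → α} {s : Set Word}

theorem lexLe_iff_map_le (hr : ∀ x ∈ s, ∀ y ∈ s, r x y ↔ v x ≤ v y) {xs ys : List Word}
    (hxs : ∀ x ∈ xs, x ∈ s) (hys : ∀ y ∈ ys, y ∈ s) : LexLe r xs ys ↔ xs.map v ≤ ys.map v := by
  induction xs generalizing ys with
  | nil => exact iff_of_true (lexLe_nil_left ys) (List.nil_le' _)
  | cons x xs ih =>
    cases ys with
    | nil => exact iff_of_false (not_lexLe_cons_nil x xs) List.not_cons_le_nil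
    | cons y ys =>
      rw [List.forall_mem_cons] at hxs hys
      rw [lexLe_cons_cons, List.map_cons, List.map_cons, List.cons_le_cons_iff', ih hxs.2 hys.2,
        hr x hxs.1 y hys.1, hr y hys.1 x hxs.1, ← lt_iff_le_not_ge, ← and_assoc,
        ← le_antisymm_iff]

theorem isLexMax_suffixMaxima (hr : ∀ x ∈ s, ∀ y ∈ s, r x y ↔ v x ≤ v y) {l : List Word}
    (hl : ∀ x ∈ l, x ∈ s) : IsLexMax r l (List.suffixMaxima v l) := by
  refine ⟨List.suffixMaxima_sublist l, fun N hN => ?_⟩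
  rw [lexLe_iff_map_le hr (fun x hx => hl x (hN.subset hx))
    (fun x hx => hl x ((List.suffixMaxima_sublist l).subset hx))]
  exact List.map_le_map_suffixMaxima hN

theorem IsLexMax.map_eq (hr : ∀ x ∈ s, ∀ y ∈ s, r x y ↔ v x ≤ v y) {l M : List Word}
    (hl : ∀ x ∈ l, x ∈ s) (hM : IsLexMax r l M) : M.map v = (List.suffixMaxima v l).map v := by
  refine le_antisymm (List.map_le_map_suffixMaxima hM.1) ?_
  rw [← lexLe_iff_map_le hr (fun x hx => hl x ((List.suffixMaxima_sublist l).subset hx))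
    (fun x hx => hl x (hM.1.subset hx))]
  exact hM.2 _ (List.suffixMaxima_sublist l)

theorem forall_isLexMax_lexLe_iff {v : Word → Ordinal}
    (hr : ∀ x ∈ s, ∀ y ∈ s, r x y ↔ v x ≤ v y) {xs ys : List Word} (hxs : ∀ x ∈ xs, x ∈ s)
    (hys : ∀ y ∈ ys, y ∈ s) :
    (∀ MA MB, IsLexMax r xs MA → IsLexMax r ys MB → LexLe r MA MB) ↔
      opowSum (xs.map v) ≤ opowSum (ys.map v) := by
  have key : ∀ MA MB, IsLexMax r xs MA → IsLexMax r ys MB →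
      (LexLe r MA MB ↔ opowSum (xs.map v) ≤ opowSum (ys.map v)) := by
    intro MA MB hA hB
    rw [lexLe_iff_map_le hr (fun x hx => hxs x (hA.1.subset hx))
      (fun x hx => hys x (hB.1.subset hx)), hA.map_eq hr hxs, hB.map_eq hr hys,
      ← strictMonoOn_opowSum.le_iff_le (List.pairwise_map_suffixMaxima xs)
        (List.pairwise_map_suffixMaxima ys),
      List.opowSum_map_suffixMaxima, List.opowSum_map_suffixMaxima]
  have hA := isLexMax_suffixMaxima hr hxs
  have hB := isLexMax_suffixMaxima hr hys
  exact ⟨fun h => (key _ _ hA hB).1 (h _ _ hA hB), fun h MA MB hA hB => (key MA MB hA hB).2 h⟩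

end LexMax

noncomputable def wordValAux : ℕ → Word → ℕ → Ordinal.{0}
  | 0, _, _ => 0
  | f + 1, A, n =>
    match A.min? with
    | none => 0
    | some m => (ω ^ ·)^[m - n] (opowSum ((A.splitOn m).map (wordValAux f · (m + 1))))

noncomputable def wordVal (A : Word) (n : ℕ) : Ordinal.{0} := wordValAux A.length A n

@[simp] theorem wordVal_nil (n : ℕ) : wordVal [] n = 0 := rfl

theorem wordValAux_congr {f f' : ℕ} {A : Word} (n : ℕ) (hf : A.length ≤ f)
    (hf' : A.length ≤ f') : wordValAux f A n = wordValAux f' A n := by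
  induction f generalizing f' A n with
  | zero => obtain rfl : A = [] := List.length_eq_zero_iff.1 (by omega); cases f' <;> rfl
  | succ f ih =>
    cases f' with
    | zero => obtain rfl : A = [] := List.length_eq_zero_iff.1 (by omega); rfl
    | succ f' =>
      cases hmin : A.min? with
      | none => simp only [wordValAux, hmin]
      | some m =>
        simp only [wordValAux, hmin]
        congr 2
        refine List.map_congr_left fun b hb => ?_
        have := List.length_lt_of_mem_splitOn (List.min?_eq_some_iff.1 hmin).1 hb
        exact ih (m + 1) (by omega) (by omega)

theorem wordVal_eq {A : Word} {m : ℕ} (hmin : A.min? = some m) (n : ℕ) :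
    wordVal A n = (ω ^ ·)^[m - n] (opowSum ((A.splitOn m).map (wordVal · (m + 1)))) := by
  have hm := (List.min?_eq_some_iff.1 hmin).1
  obtain ⟨L, hL⟩ : ∃ L, A.length = L + 1 :=
    ⟨A.length - 1, by have := List.length_pos_of_mem hm; omega⟩
  rw [wordVal, hL]
  simp only [wordValAux, hmin]
  congr 2
  refine List.map_congr_left fun b hb => ?_
  have := List.length_lt_of_mem_splitOn hm hb
  exact wordValAux_congr _ (by omega) le_rfl

theorem wordVal_pos {A : Word} (hA : A ≠ []) (n : ℕ) : 0 < wordVal A n := by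
  obtain ⟨m, hmin⟩ := Option.ne_none_iff_exists'.1 (mt List.min?_eq_none_iff.1 hA)
  rw [wordVal_eq hmin]
  generalize m - n = j
  induction j with
  | zero => exact opowSum_pos (by simp)
  | succ j _ =>
    rw [Function.iterate_succ_apply']
    exact opow_pos _ omega0_pos

theorem wordVal_eq_opow_succ {A : Word} {n : ℕ} (hA : A ≠ []) (h : ∀ x ∈ A, n < x) :
    wordVal A n = ω ^ wordVal A (n + 1) := by
  obtain ⟨m, hmin⟩ := Option.ne_none_iff_exists'.1 (mt List.min?_eq_none_iff.1 hA)
  have hnm := h m (List.min?_eq_some_iff.1 hmin).1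
  rw [wordVal_eq hmin, wordVal_eq hmin, show m - n = m - (n + 1) + 1 by omega,
    Function.iterate_succ_apply']

theorem wordVal_eq_opowSum {A : Word} {n : ℕ} (hA : A ≠ []) (h : ∀ x ∈ A, n ≤ x) :
    wordVal A n = opowSum ((A.splitOn n).map (wordVal · (n + 1))) := by
  obtain ⟨m, hmin⟩ := Option.ne_none_iff_exists'.1 (mt List.min?_eq_none_iff.1 hA)
  obtain ⟨hm, hmin'⟩ := List.min?_eq_some_iff.1 hmin
  rcases (h m hm).eq_or_lt with rfl | hnm
  · rw [wordVal_eq hmin, Nat.sub_self, Function.iterate_zero, id]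
  · rw [List.splitOn_eq_singleton fun hn => (hmin' n hn).not_gt hnm]
    simpa using wordVal_eq_opow_succ hA fun x hx => hnm.trans_le (hmin' x hx)

theorem lt_of_mem_splitOn {A b : Word} {n : ℕ} (hA : ∀ x ∈ A, n ≤ x) (hb : b ∈ A.splitOn n) :
    ∀ x ∈ b, n < x := fun x hx => by
  obtain ⟨hxA, hxn⟩ := List.mem_and_ne_of_mem_splitOn hb hx
  exact (hA x hxA).lt_of_ne' hxn

theorem wordVal_eq_add_opow_of_splitOn_eq {A b : Word} {L : List Word} {n : ℕ} (hA' : A ≠ [])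
    (hA : ∀ x ∈ A, n ≤ x) (hsplit : A.splitOn n = L ++ [b]) :
    wordVal A n = opowSum (L.map (wordVal · (n + 1))) + ω ^ wordVal b (n + 1) := by
  simp [wordVal_eq_opowSum hA' hA, hsplit]

theorem wordVal_le_wordVal_iff_succ {A B : Word} {n : ℕ} (hA : ∀ x ∈ A, n < x)
    (hB : ∀ x ∈ B, n < x) : wordVal A n ≤ wordVal B n ↔ wordVal A (n + 1) ≤ wordVal B (n + 1) := by
  rcases eq_or_ne A [] with rfl | hA'
  · simp
  rcases eq_or_ne B [] with rfl | hB'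
  · simp [(wordVal_pos hA' n).ne', (wordVal_pos hA' (n + 1)).ne']
  rw [wordVal_eq_opow_succ hA' hA, wordVal_eq_opow_succ hB' hB,
    opow_le_opow_iff_right one_lt_omega0]

theorem wordVal_le_wordVal_iff_of_le {A B : Word} {n m : ℕ} (hnm : n ≤ m) (hA : ∀ x ∈ A, m ≤ x)
    (hB : ∀ x ∈ B, m ≤ x) : wordVal A n ≤ wordVal B n ↔ wordVal A m ≤ wordVal B m := by
  induction m, hnm using Nat.le_induction with
  | base => rfl
  | succ m _ ih =>
    rw [ih (fun x hx => by have := hA x hx; omega) (fun x hx => by have := hB x hx; omega)]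
    exact wordVal_le_wordVal_iff_succ (fun x hx => hA x hx) (fun x hx => hB x hx)

theorem wordVal_le_wordVal_iff_opowSum {A B : Word} {m : ℕ} (hmin : (A ++ B).min? = some m) :
    wordVal A 0 ≤ wordVal B 0 ↔
      opowSum ((A.splitOn m).map (wordVal · (m + 1))) ≤
        opowSum ((B.splitOn m).map (wordVal · (m + 1))) := by
  obtain ⟨hm, hmin'⟩ := List.min?_eq_some_iff.1 hmin
  have hA : ∀ x ∈ A, m ≤ x := fun x hx => hmin' x (List.mem_append_left B hx)
  have hB : ∀ x ∈ B, m ≤ x := fun x hx => hmin' x (List.mem_append_right A hx)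
  rw [wordVal_le_wordVal_iff_of_le m.zero_le hA hB]
  rcases eq_or_ne A [] with rfl | hA'
  · refine iff_of_true (by simp) ?_
    simpa using Order.one_le_iff_pos.2 (opowSum_pos (by simp))
  rcases eq_or_ne B [] with rfl | hB'
  · refine iff_of_false (by simpa using (wordVal_pos hA' m).ne') (not_le.2 ?_)
    have h2 := List.two_le_length_splitOn (by simpa using hm)
    calc opowSum (([] : Word).splitOn m |>.map (wordVal · (m + 1))) = 1 := by simp
      _ < 2 := one_lt_two
      _ ≤ ((A.splitOn m).map (wordVal · (m + 1))).length := by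
          rw [List.length_map]; exact_mod_cast h2
      _ ≤ _ := length_le_opowSum _
  rw [wordVal_eq_opowSum hA' hA, wordVal_eq_opowSum hB' hB]

theorem leAux_succ_self (f : ℕ) (A : Word) : leAux (f + 1) A A :=
  Or.inr fun _ _ _ _ hA hB => hB.2 _ hA.1

theorem length_add_length_lt_of_mem_splitOn {A B x y : Word} {m : ℕ} (hm : m ∈ A ++ B)
    (hx : x ∈ A.splitOn m ++ B.splitOn m) (hy : y ∈ A.splitOn m ++ B.splitOn m) (hxy : x ≠ y) :
    x.length + y.length < A.length + B.length := by
  have hsum := List.length_add_length_le_sum hx hy hxy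
  rw [List.map_append, List.sum_append] at hsum
  have hA := List.sum_map_length_splitOn_add_length m A
  have hB := List.sum_map_length_splitOn_add_length m B
  have hA₁ := List.length_pos_of_ne_nil (List.splitOn_ne_nil m A)
  have hB₁ := List.length_pos_of_ne_nil (List.splitOn_ne_nil m B)
  rcases List.mem_append.1 hm with hm | hm
  · have := List.two_le_length_splitOn hm; omega
  · have := List.two_le_length_splitOn hm; omega

theorem leAux_iff_wordVal {fuel : ℕ} {A B : Word} (h : A.length + B.length < fuel) :
    leAux fuel A B ↔ wordVal A 0 ≤ wordVal B 0 := by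
  induction fuel generalizing A B with
  | zero => omega
  | succ f ih =>
    rw [leAux]
    by_cases hAB : A = [] ∧ B = []
    · obtain ⟨rfl, rfl⟩ := hAB
      exact iff_of_true (Or.inl ⟨rfl, rfl⟩) le_rfl
    obtain ⟨m, hmin⟩ := Option.ne_none_iff_exists'.1
      (mt List.min?_eq_none_iff.1 fun h => hAB (List.append_eq_nil_iff.1 h))
    obtain ⟨hm, hmin'⟩ := List.min?_eq_some_iff.1 hmin
    have hA : ∀ x ∈ A, m ≤ x := fun x hx => hmin' x (List.mem_append_left B hx)
    have hB : ∀ x ∈ B, m ≤ x := fun x hx => hmin' x (List.mem_append_right A hx)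
    set s : Set Word := {x | x ∈ A.splitOn m ++ B.splitOn m}
    have hr : ∀ x ∈ s, ∀ y ∈ s, leAux f x y ↔ wordVal x (m + 1) ≤ wordVal y (m + 1) := by
      intro x hx y hy
      rcases eq_or_ne x y with rfl | hxy
      · have : 0 < A.length + B.length := by simpa using List.length_pos_of_mem hm
        obtain ⟨f, rfl⟩ : ∃ f', f = f' + 1 := ⟨f - 1, by omega⟩
        exact iff_of_true (leAux_succ_self f x) le_rfl
      have hlen := length_add_length_lt_of_mem_splitOn hm hx hy hxy
      have hgt : ∀ z ∈ s, ∀ c ∈ z, m + 1 ≤ c := fun z hz => by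
        rcases List.mem_append.1 hz with hz | hz
        exacts [lt_of_mem_splitOn hA hz, lt_of_mem_splitOn hB hz]
      rw [ih (by omega), wordVal_le_wordVal_iff_of_le (Nat.zero_le _) (hgt x hx) (hgt y hy)]
    rw [or_iff_right hAB, wordVal_le_wordVal_iff_opowSum hmin,
      ← forall_isLexMax_lexLe_iff hr (fun x hx => List.mem_append_left _ hx)
        (fun x hx => List.mem_append_right _ hx)]
    simp only [hmin, Option.some.injEq, forall_eq']

theorem wle_iff_wordVal {A B : Word} : Wle A B ↔ wordVal A 0 ≤ wordVal B 0 :=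
  leAux_iff_wordVal (Nat.lt_succ_self _)

theorem wequiv_iff_wordVal_eq {A B : Word} : Wequiv A B ↔ wordVal A 0 = wordVal B 0 := by
  rw [Wequiv, wle_iff_wordVal, wle_iff_wordVal, le_antisymm_iff]

/-- The value at level `n` of `A ++ [n + d]`, as a function of the value of `A`. -/
noncomputable def appendOrd : ℕ → Ordinal → Ordinal
  | 0, α => if α = 0 then 2 else α + 1
  | d + 1, α => if α = 0 then ω ^ appendOrd d 0 else α + ω ^ appendOrd d (lastExp α)

theorem lt_appendOrd (d : ℕ) (α : Ordinal) : α < appendOrd d α := by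
  cases d with
  | zero =>
    rw [appendOrd]
    split_ifs with h
    · exact h ▸ zero_lt_two
    · exact lt_add_one α
  | succ d =>
    rw [appendOrd]
    split_ifs with h
    · rw [h]
      exact opow_pos _ omega0_pos
    · exact lt_add_of_pos_right α (opow_pos _ omega0_pos)

theorem wordVal_append_singleton {k : ℕ} {d n : ℕ} {A : Word} (hk : n + d = k)
    (hA : ∀ x ∈ A, n ≤ x) : wordVal (A ++ [k]) n = appendOrd d (wordVal A n) := by
  induction d generalizing n A with
  | zero =>
    obtain rfl : n = k := hk
    rcases eq_or_ne A [] with rfl | hA'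
    · have hsplit : [n].splitOn n = [[], []] := List.splitOn_append_singleton_self []
      simp [wordVal_eq (show [n].min? = some n from rfl), hsplit, appendOrd, one_add_one_eq_two]
    rw [wordVal_eq_opowSum (by simp)
        (List.forall_mem_append.2 ⟨hA, List.forall_mem_singleton.2 le_rfl⟩),
      List.splitOn_append_singleton_self,
      List.map_append, opowSum_append, ← wordVal_eq_opowSum hA' hA, appendOrd,
      if_neg (wordVal_pos hA' n).ne']
    simp
  | succ d ih =>
    have hAk : ∀ x ∈ A ++ [k], n ≤ x :=
      List.forall_mem_append.2 ⟨hA, List.forall_mem_singleton.2 (by omega)⟩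
    rcases eq_or_ne A [] with rfl | hA'
    · rw [List.nil_append,
        wordVal_eq_opow_succ (by simp) (List.forall_mem_singleton.2 (by omega)),
        ← List.nil_append [k], ih (n := n + 1) (by omega) (by simp), wordVal_nil, wordVal_nil,
        appendOrd, if_pos rfl]
    obtain ⟨L, b, hsplit, hsplit'⟩ :=
      List.exists_splitOn_append_singleton (a := n) (c := k) (by omega) A
    have hb := lt_of_mem_splitOn hA (hsplit ▸ List.mem_append_right L (List.mem_singleton_self b))
    have hval := wordVal_eq_add_opow_of_splitOn_eq hA' hA hsplit
    calc wordVal (A ++ [k]) n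
        = opowSum (L.map (wordVal · (n + 1))) + ω ^ wordVal (b ++ [k]) (n + 1) :=
          wordVal_eq_add_opow_of_splitOn_eq (by simp) hAk hsplit'
      _ = wordVal A n + ω ^ appendOrd d (wordVal b (n + 1)) := by
          rw [ih (by omega) hb, hval, add_assoc, add_omega0_opow
            ((opow_lt_opow_iff_right one_lt_omega0).2 (lt_appendOrd d _))]
      _ = appendOrd (d + 1) (wordVal A n) := by
          rw [appendOrd, if_neg (wordVal_pos hA' n).ne', hval, lastExp_add_opow]

theorem append_symbol_congruence (k : ℕ) (A B : Word) (h : Wequiv A B) :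
    Wequiv (A ++ [k]) (B ++ [k]) := by
  rw [wequiv_iff_wordVal_eq] at h ⊢
  rw [wordVal_append_singleton (zero_add k) fun x _ => x.zero_le,
    wordVal_append_singleton (zero_add k) fun x _ => x.zero_le, h]
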